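/- Suppose det b ≠ 0. Then for every positive integer q, all functions f₁,f₂ : (ℤ/qℤ)⁴ → ℂ, and every r ∈ (ℤ/qℤ)*: |T_{f₁,f₂}(r)| ≤ gcd(q, det b)² ‖f₁‖₂ ‖f₂‖₂. -/

import Mathlib

/- STATEMENT 4: Suppose det b ≠ 0. Then for every positive integer q, all functions
f₁,f₂ : (ℤ/qℤ)⁴ → ℂ, and every r ∈ (ℤ/qℤ)*:
|T_{f₁,f₂}(r)| ≤ gcd(q, det b)² ‖f₁‖₂ ‖f₂‖₂. -/

open Matrix

noncomputable section

/-- The quadratic form Q(x,y) = xᵀax + xᵀby + yᵀcy over a commutative ring. -/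
def Qform {R : Type*} [CommRing R] (a b c : Matrix (Fin 4) (Fin 4) R)
    (x y : Fin 4 → R) : R :=
  x ⬝ᵥ (a *ᵥ x) + x ⬝ᵥ (b *ᵥ y) + y ⬝ᵥ (c *ᵥ y)

/-- e_q(t) := e^{2πit/q} for t ∈ ℤ/qℤ. -/
def eZMod (q : ℕ) (t : ZMod q) : ℂ :=
  Complex.exp (2 * Real.pi * Complex.I * (t.val : ℂ) / (q : ℂ))

/-- T_{f₁,f₂}(r) := q² 𝔼_{x,y ∈ (ℤ/qℤ)⁴} f₁(x) f₂(y) e_q(r Q(x,y)). -/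
def Tsum (q : ℕ) [NeZero q] (a b c : Matrix (Fin 4) (Fin 4) ℤ)
    (f₁ f₂ : (Fin 4 → ZMod q) → ℂ) (r : (ZMod q)ˣ) : ℂ :=
  (q : ℂ) ^ 2 * ((∑ x : Fin 4 → ZMod q, ∑ y : Fin 4 → ZMod q,
    f₁ x * f₂ y * eZMod q ((r : ZMod q) *
      Qform (a.map (Int.cast : ℤ → ZMod q)) (b.map (Int.cast : ℤ → ZMod q))
        (c.map (Int.cast : ℤ → ZMod q)) x y)) / (q : ℂ) ^ 8)

/-- ‖f‖₂ := (𝔼_x |f(x)|²)^{1/2}. -/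
def l2norm (q : ℕ) [NeZero q] (f : (Fin 4 → ZMod q) → ℂ) : ℝ :=
  Real.sqrt ((∑ x : Fin 4 → ZMod q, ‖f x‖ ^ 2) / (q : ℝ) ^ 4)

/-! The phases `r·xᵀax` and `r·yᵀcy` have modulus one, so after Cauchy–Schwarz in `x` it remains
to bound `∑ₓ |∑_y h(y) ψ(x · (r b) y)|²` for the standard additive character `ψ` of `ℤ/qℤ`.
Expanding the square and summing the characters over `x` leaves
`q⁴ ∑_{b z = 0} ∑_y h(z + y) conj h(y) ≤ q⁴ · #ker (b mod q) · ∑_y |h(y)|²`.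
Multiplying `b z = 0` by the adjugate gives `det b · z = 0`, and multiplication by `det b` on
`ℤ/qℤ` has a kernel of `gcd(q, det b)` elements, so `#ker (b mod q) ≤ gcd(q, det b)⁴`. -/

open Finset ComplexConjugate

lemma sum_norm_mul_norm_add_le {V E : Type*} [AddGroup V] [Fintype V] [SeminormedAddGroup E]
    (g : V → E) (z : V) : ∑ y, ‖g (z + y)‖ * ‖g y‖ ≤ ∑ y, ‖g y‖ ^ 2 :=
  calc ∑ y, ‖g (z + y)‖ * ‖g y‖
      ≤ √(∑ y, ‖g (z + y)‖ ^ 2) * √(∑ y, ‖g y‖ ^ 2) := Real.sum_mul_le_sqrt_mul_sqrt _ _ _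
    _ = ∑ y, ‖g y‖ ^ 2 := by
      rw [Fintype.sum_equiv (Equiv.addLeft z) (fun y => ‖g (z + y)‖ ^ 2) (fun y => ‖g y‖ ^ 2)
          fun _ => rfl, Real.mul_self_sqrt (sum_nonneg fun _ _ => sq_nonneg _)]

namespace AddChar

variable {R : Type*} [CommRing R] [Fintype R] [DecidableEq R] {ψ : AddChar R ℂ}
  {ι κ : Type*} [Fintype ι] [DecidableEq ι] [Fintype κ] [DecidableEq κ]

lemma IsPrimitive.sum_apply_dotProduct (hψ : ψ.IsPrimitive) (w : ι → R) :
    ∑ x : ι → R, ψ (x ⬝ᵥ w) = if w = 0 then (Fintype.card R : ℂ) ^ Fintype.card ι else 0 := by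
  split_ifs with hw
  · simp [hw]
  obtain ⟨i, hi⟩ := Function.ne_iff.mp hw
  obtain ⟨t, ht⟩ := ne_one_iff.mp (hψ hi)
  let χ : AddChar (ι → R) ℂ := ψ.compAddMonoidHom
    { toFun := (· ⬝ᵥ w), map_zero' := zero_dotProduct w, map_add' := (add_dotProduct · · w) }
  refine sum_eq_zero_of_ne_one (ψ := χ) (ne_one_iff.mpr ⟨Pi.single (M := fun _ => R) i t, ?_⟩)
  simpa [χ, mul_comm] using ht

lemma IsPrimitive.sum_norm_sq_sum_mul_apply_dotProduct_mulVec (hψ : ψ.IsPrimitive)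
    (M : Matrix ι κ R) (h : (κ → R) → ℂ) :
    ((∑ x : ι → R, ‖∑ y, h y * ψ (x ⬝ᵥ (M *ᵥ y))‖ ^ 2 : ℝ) : ℂ) =
      (Fintype.card R : ℂ) ^ Fintype.card ι *
        ∑ z with M *ᵥ z = 0, ∑ y, h (z + y) * conj (h y) := by
  have expand (x : ι → R) : (‖∑ y, h y * ψ (x ⬝ᵥ (M *ᵥ y))‖ ^ 2 : ℂ) =
      ∑ y', ∑ y, h y * conj (h y') * ψ (x ⬝ᵥ (M *ᵥ (y - y'))) := by
    rw [← Complex.mul_conj', map_sum, sum_mul_sum, sum_comm]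
    refine sum_congr rfl fun y' _ => sum_congr rfl fun y _ => ?_
    rw [map_mul, ← map_neg_eq_conj, mulVec_sub, dotProduct_sub, sub_eq_add_neg,
      map_add_eq_mul]
    ring
  calc _ = ∑ y', ∑ y, h y * conj (h y') * ∑ x : ι → R, ψ (x ⬝ᵥ (M *ᵥ (y - y'))) := by
        push_cast
        simp_rw [expand, mul_sum]
        rw [sum_comm]
        exact sum_congr rfl fun _ _ => sum_comm
    _ = ∑ y', ∑ z, h (z + y') * conj (h y') *
          if M *ᵥ z = 0 then (Fintype.card R : ℂ) ^ Fintype.card ι else 0 := by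
        simp_rw [hψ.sum_apply_dotProduct]
        refine sum_congr rfl fun y' _ => (Fintype.sum_equiv (Equiv.addRight y') _ _ ?_).symm
        simp
    _ = _ := by
        simp_rw [mul_ite, mul_zero, ← sum_filter]
        rw [sum_comm, mul_sum]
        exact sum_congr rfl fun _ _ => by rw [mul_sum]; exact sum_congr rfl fun _ _ => by ring

lemma IsPrimitive.sum_norm_sq_sum_mul_apply_dotProduct_mulVec_le (hψ : ψ.IsPrimitive)
    (M : Matrix ι κ R) (h : (κ → R) → ℂ) :
    ∑ x : ι → R, ‖∑ y, h y * ψ (x ⬝ᵥ (M *ᵥ y))‖ ^ 2 ≤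
      Fintype.card R ^ Fintype.card ι * #{z | M *ᵥ z = 0} * ∑ y, ‖h y‖ ^ 2 := by
  rw [← Real.norm_of_nonneg (sum_nonneg fun _ _ => sq_nonneg _), ← Complex.norm_real,
    hψ.sum_norm_sq_sum_mul_apply_dotProduct_mulVec, norm_mul, norm_pow, Complex.norm_natCast,
    mul_assoc]
  gcongr
  calc _ ≤ ∑ z with M *ᵥ z = 0, ∑ y, ‖h (z + y)‖ * ‖h y‖ := by
        refine (norm_sum_le _ _).trans (sum_le_sum fun z _ => (norm_sum_le _ _).trans_eq ?_)
        simp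
    _ ≤ ∑ z with M *ᵥ z = 0, ∑ y, ‖h y‖ ^ 2 := sum_le_sum fun z _ => sum_norm_mul_norm_add_le h z
    _ = _ := by rw [sum_const, nsmul_eq_mul]

end AddChar

lemma ZMod.card_filter_intCast_mul_eq_zero_le (q : ℕ) [NeZero q] (d : ℤ) :
    #{t : ZMod q | (d : ZMod q) * t = 0} ≤ q.gcd d.natAbs := by
  calc #{t : ZMod q | (d : ZMod q) * t = 0} ≤ #{t : ZMod q | q.gcd d.natAbs • t = 0} := by
        refine card_le_card fun t ht => ?_
        rw [mem_filter] at ht ⊢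
        refine ⟨mem_univ t, gcd_nsmul_eq_zero.mpr ⟨by simp, ?_⟩⟩
        rcases Int.natAbs_eq d with hd | hd <;> rw [hd] at ht <;> simpa [nsmul_eq_mul] using ht.2
    _ ≤ q.gcd d.natAbs :=
        IsAddCyclic.card_nsmul_eq_zero_le (Nat.gcd_pos_of_pos_left _ (NeZero.pos q))

namespace Matrix

variable {ι : Type*} [Fintype ι] [DecidableEq ι]

lemma card_filter_mulVec_eq_zero_le {R : Type*} [CommRing R] [Fintype R] [DecidableEq R]
    (M : Matrix ι ι R) :
    #{z : ι → R | M *ᵥ z = 0} ≤ #{t : R | M.det * t = 0} ^ Fintype.card ι := by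
  calc #{z : ι → R | M *ᵥ z = 0}
      ≤ #(Fintype.piFinset fun _ : ι => ({t | M.det * t = 0} : Finset R)) := by
        refine card_le_card fun z hz => ?_
        simp only [mem_filter, mem_univ, true_and, Fintype.mem_piFinset] at hz ⊢
        have hdet : M.det • z = 0 := by
          simpa [mulVec_mulVec, adjugate_mul, smul_mulVec] using congrArg (M.adjugate *ᵥ ·) hz
        exact fun i => congrFun hdet i
    _ = _ := by simp [Fintype.card_piFinset]

lemma card_filter_map_intCast_mulVec_eq_zero_le (q : ℕ) [NeZero q] (b : Matrix ι ι ℤ) :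
    #{z : ι → ZMod q | b.map (Int.cast : ℤ → ZMod q) *ᵥ z = 0} ≤
      q.gcd b.det.natAbs ^ Fintype.card ι :=
  (card_filter_mulVec_eq_zero_le _).trans <| Nat.pow_le_pow_left
    (by simpa [Int.cast_det] using ZMod.card_filter_intCast_mul_eq_zero_le q b.det) _

end Matrix

lemma norm_sum_mul_le_sqrt_mul_sqrt {ι E : Type*} [SeminormedRing E] (s : Finset ι) (f g : ι → E) :
    ‖∑ i ∈ s, f i * g i‖ ≤ √(∑ i ∈ s, ‖f i‖ ^ 2) * √(∑ i ∈ s, ‖g i‖ ^ 2) :=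
  (norm_sum_le _ _).trans <| (sum_le_sum fun _ _ => norm_mul_le _ _).trans <|
    Real.sum_mul_le_sqrt_mul_sqrt _ _ _

section QuadraticForm

variable {R : Type*} [CommRing R] [Fintype R] [DecidableEq R] {ψ : AddChar R ℂ}

lemma AddChar.IsPrimitive.sum_norm_sq_sum_mul_apply_Qform_le (hψ : ψ.IsPrimitive)
    (A B C : Matrix (Fin 4) (Fin 4) R) (r : Rˣ) (f : (Fin 4 → R) → ℂ) :
    ∑ x, ‖∑ y, f y * ψ (r * Qform A B C x y)‖ ^ 2 ≤
      Fintype.card R ^ 4 * #{z | B *ᵥ z = 0} * ∑ y, ‖f y‖ ^ 2 := by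
  have hsplit (x y : Fin 4 → R) : f y * ψ (r * Qform A B C x y) = ψ (r * (x ⬝ᵥ A *ᵥ x)) *
      (f y * ψ (r * (y ⬝ᵥ C *ᵥ y)) * ψ (x ⬝ᵥ ((r : R) • B) *ᵥ y)) := by
    simp only [Qform, mul_add, smul_mulVec, dotProduct_smul, smul_eq_mul, AddChar.map_add_eq_mul]
    ring
  have hker : #{z | ((r : R) • B) *ᵥ z = 0} = #{z | B *ᵥ z = 0} := by
    simp only [smul_mulVec, ← Units.smul_def, smul_eq_zero_iff_eq]
  calc ∑ x, ‖∑ y, f y * ψ (r * Qform A B C x y)‖ ^ 2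
      = ∑ x, ‖∑ y, f y * ψ (r * (y ⬝ᵥ C *ᵥ y)) * ψ (x ⬝ᵥ ((r : R) • B) *ᵥ y)‖ ^ 2 := by
        simp_rw [hsplit, ← mul_sum, norm_mul, AddChar.norm_apply, one_mul]
    _ ≤ _ := hψ.sum_norm_sq_sum_mul_apply_dotProduct_mulVec_le _ _
    _ = _ := by simp [hker]

end QuadraticForm

lemma ZMod.sum_norm_sq_sum_mul_stdAddChar_Qform_le (q : ℕ) [NeZero q]
    (a b c : Matrix (Fin 4) (Fin 4) ℤ) (r : (ZMod q)ˣ) (f : (Fin 4 → ZMod q) → ℂ) :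
    ∑ x, ‖∑ y, f y * stdAddChar ((r : ZMod q) *
        Qform (a.map Int.cast) (b.map Int.cast) (c.map Int.cast) x y)‖ ^ 2 ≤
      ((q : ℝ) ^ 2 * (q.gcd b.det.natAbs : ℝ) ^ 2) ^ 2 * ∑ y, ‖f y‖ ^ 2 := by
  refine ((isPrimitive_stdAddChar q).sum_norm_sq_sum_mul_apply_Qform_le _ _ _ r f).trans ?_
  have hK := Matrix.card_filter_map_intCast_mulVec_eq_zero_le q b
  rw [Fintype.card_fin] at hK
  rw [ZMod.card, mul_pow, ← pow_mul, ← pow_mul]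
  gcongr
  exact_mod_cast hK

lemma eZMod_eq_stdAddChar (q : ℕ) [NeZero q] (t : ZMod q) : eZMod q t = ZMod.stdAddChar t := by
  conv_rhs => rw [← ZMod.intCast_zmod_cast t, ZMod.stdAddChar_coe]
  rw [eZMod, ZMod.cast_eq_val]
  push_cast
  ring_nf

lemma l2norm_eq (q : ℕ) [NeZero q] (f : (Fin 4 → ZMod q) → ℂ) :
    l2norm q f = √(∑ x, ‖f x‖ ^ 2) / (q : ℝ) ^ 2 := by
  rw [l2norm, Real.sqrt_div' _ (by positivity), show (q : ℝ) ^ 4 = ((q : ℝ) ^ 2) ^ 2 by ring,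
    Real.sqrt_sq (by positivity)]

theorem stmt4_general (a b c : Matrix (Fin 4) (Fin 4) ℤ) (q : ℕ) [NeZero q]
    (f₁ f₂ : (Fin 4 → ZMod q) → ℂ) (r : (ZMod q)ˣ) :
    ‖Tsum q a b c f₁ f₂ r‖ ≤ (Nat.gcd q b.det.natAbs : ℝ) ^ 2 * l2norm q f₁ * l2norm q f₂ := by
  set G : (Fin 4 → ZMod q) → ℂ := fun x => ∑ y, f₂ y * ZMod.stdAddChar ((r : ZMod q) *
    Qform (a.map Int.cast) (b.map Int.cast) (c.map Int.cast) x y)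
  have hT : Tsum q a b c f₁ f₂ r = (∑ x, f₁ x * G x) / (q : ℂ) ^ 6 := by
    simp only [Tsum, G, eZMod_eq_stdAddChar, mul_sum, mul_assoc]
    field_simp
  have hG : √(∑ x, ‖G x‖ ^ 2) ≤
      (q : ℝ) ^ 2 * (q.gcd b.det.natAbs : ℝ) ^ 2 * √(∑ y, ‖f₂ y‖ ^ 2) := by
    rw [← Real.sqrt_sq (by positivity : (0 : ℝ) ≤ (q : ℝ) ^ 2 * (q.gcd b.det.natAbs : ℝ) ^ 2),
      ← Real.sqrt_mul (by positivity)]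
    exact Real.sqrt_le_sqrt (ZMod.sum_norm_sq_sum_mul_stdAddChar_Qform_le q a b c r f₂)
  rw [hT, l2norm_eq, l2norm_eq, norm_div, norm_pow, Complex.norm_natCast]
  calc ‖∑ x, f₁ x * G x‖ / (q : ℝ) ^ 6
      ≤ √(∑ x, ‖f₁ x‖ ^ 2) * √(∑ x, ‖G x‖ ^ 2) / (q : ℝ) ^ 6 := by
        gcongr; exact norm_sum_mul_le_sqrt_mul_sqrt _ _ _
    _ ≤ √(∑ x, ‖f₁ x‖ ^ 2) *
          ((q : ℝ) ^ 2 * (q.gcd b.det.natAbs : ℝ) ^ 2 * √(∑ y, ‖f₂ y‖ ^ 2)) / (q : ℝ) ^ 6 := by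
        gcongr
    _ = _ := by field_simp

theorem stmt4 (a b c : Matrix (Fin 4) (Fin 4) ℤ) (ha : aᵀ = a) (hc : cᵀ = c)
    (hb : b.det ≠ 0) (q : ℕ) [NeZero q]
    (f₁ f₂ : (Fin 4 → ZMod q) → ℂ) (r : (ZMod q)ˣ) :
    ‖Tsum q a b c f₁ f₂ r‖ ≤ (Nat.gcd q b.det.natAbs : ℝ) ^ 2 * l2norm q f₁ * l2norm q f₂ :=
  stmt4_general a b c q f₁ f₂ r
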